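/- arXiv:math/0511739 — 2 statements merged into one kernel-verified Lean document; each statement's English description precedes it below -/
import Mathlib

section
/- Let d ≥ 1 be an integer and 0 < β < 1 with 2/β < d < 2(1+β)/β, and let p_t(x) = (4πt)^{−d/2} exp(−‖x‖²/(4t)) be the Gaussian heat kernel on ℝ^d. Fix 0 ≤ u < v < s < t and z > 0, and for T > 0 define U_T(x,r) = z( 𝟙_{[0,s+T]}(r) ∫_{s+T}^{t+T} p_{r'−r}(x) dr' + 𝟙_{(s+T,t+T]}(r) ∫_r^{t+T} p_{r'−r}(x) dr' ) and R(x,r) = 𝟙_{[0,u]}(r) ∫_u^v p_{r'−r}(x) dr' + 𝟙_{(u,v]}(r) ∫_r^v p_{r'−r}(x) dr'. Then there is a constant C > 0 (independent of T) such that for all T ≥ 1: ∫_{ℝ^d} ∫_0^∞ ( (U_T+R)^{1+β} − U_T^{1+β} − R^{1+β} )(x,r) dr dx ≤ C·T^{−d/2}. -/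
open MeasureTheory

/-- The Gaussian heat kernel on `ℝ^d`: `p_t(x) = (4πt)^{−d/2} exp(−‖x‖²/(4t))`. -/
noncomputable def heatKer (d : ℕ) (t : ℝ) (x : EuclideanSpace ℝ (Fin d)) : ℝ :=
  (4 * Real.pi * t) ^ (-(d : ℝ) / 2) * Real.exp (-‖x‖ ^ 2 / (4 * t))

/-!
Since `(a + b)^{1+β} - a^{1+β} - b^{1+β} ≤ (1 + β) a b^β`, the integrand is at most
`(1 + β) U_T R^β`, and it vanishes for `r > v`, where `R` does. For `0 < r ≤ v` every kernel
time in `U_T` is at least `T`, so `U_T ≤ z (t - s) (4πT)^{-d/2}`, while every kernel time in `R`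
is at most `v`, which gives `R(x, r) ≲ ‖x‖^{-d} e^{-‖x‖²/(8v)}`. Hence `R^β` is dominated by
`‖x‖^{-dβ} e^{-β‖x‖²/(8v)}`, which is integrable on `ℝ^d` because `dβ < d`.
-/

open Real Set

theorem Real.add_rpow_sub_rpow_sub_rpow_le {β a b : ℝ} (hβ0 : 0 ≤ β) (hβ1 : β ≤ 1)
    (ha : 0 ≤ a) (hb : 0 ≤ b) :
    (a + b) ^ (1 + β) - a ^ (1 + β) - b ^ (1 + β) ≤ (1 + β) * a * b ^ β := by
  set f : ℝ → ℝ := fun y => (y + b) ^ (1 + β) - y ^ (1 + β)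
  have hp : 1 ≤ 1 + β := by linarith
  have hf' : ∀ y, HasDerivAt f ((1 + β) * (y + b) ^ β - (1 + β) * y ^ β) y := by
    intro y
    have h1 := ((hasDerivAt_id y).add_const b).rpow_const (p := 1 + β) (Or.inr hp)
    have h2 := hasDerivAt_rpow_const (x := y) (Or.inr hp)
    simpa only [id, one_mul, add_sub_cancel_left] using h1.fun_sub h2
  have hfd : Differentiable ℝ f := fun y => (hf' y).differentiableAt
  have hbound : ∀ y ∈ interior (Ici (0 : ℝ)), deriv f y ≤ (1 + β) * b ^ β := by
    intro y hy
    rw [interior_Ici, mem_Ioi] at hy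
    rw [(hf' y).deriv, ← mul_sub]
    gcongr
    linarith [rpow_add_le_add_rpow hy.le hb hβ0 hβ1]
  have := (convex_Ici (0 : ℝ)).image_sub_le_mul_sub_of_deriv_le hfd.continuous.continuousOn
    hfd.differentiableOn hbound 0 self_mem_Ici a ha ha
  simp only [f, zero_add, zero_rpow (by positivity : 1 + β ≠ 0), sub_zero] at this
  linarith

theorem Real.exp_neg_le_div_rpow {s k : ℝ} (hs : 0 < s) (hk : 0 ≤ k) :
    exp (-s) ≤ (k / s) ^ k := by
  rcases hk.eq_or_lt with rfl | hk
  · simp [hs.le]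
  have h : s / k ≤ exp (s / k) := by linarith [add_one_le_exp (s / k)]
  calc exp (-s) = (exp (s / k) ^ k)⁻¹ := by
        rw [← exp_mul, div_mul_cancel₀ _ hk.ne', exp_neg]
    _ ≤ ((s / k) ^ k)⁻¹ := by gcongr
    _ = (k / s) ^ k := by rw [← inv_rpow (by positivity), inv_div]

theorem Real.rpow_neg_mul_exp_rpow {y : ℝ} (hy : 0 ≤ y) (α b β : ℝ) :
    (y ^ (-α) * exp (-b * y ^ 2)) ^ β = y ^ (-(α * β)) * exp (-(β * b) * y ^ 2) := by
  rw [mul_rpow (rpow_nonneg hy _) (exp_nonneg _), ← rpow_mul hy, ← exp_mul]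
  ring_nf

theorem intervalIntegral.integral_le_mul_sub_of_le {f : ℝ → ℝ} {a b M : ℝ} (hab : a ≤ b)
    (hf0 : ∀ y ∈ Ioc a b, 0 ≤ f y) (hfM : ∀ y ∈ Ioc a b, f y ≤ M) :
    ∫ y in a..b, f y ≤ M * (b - a) := by
  have h := intervalIntegral.norm_integral_le_of_norm_le_const (f := f) (C := M) fun y hy => by
    rw [uIoc_of_le hab] at hy
    rw [Real.norm_of_nonneg (hf0 y hy)]
    exact hfM y hy
  rw [abs_of_nonneg (sub_nonneg.2 hab), Real.norm_eq_abs, abs_le] at h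
  exact h.2

theorem setLIntegral_Ioi_ofReal_le {f : ℝ → ℝ} {c v : ℝ} (hv : 0 ≤ v)
    (hle : ∀ r ∈ Ioc 0 v, f r ≤ c) (hzero : ∀ r, v < r → f r ≤ 0) :
    ∫⁻ r in Ioi 0, ENNReal.ofReal (f r) ≤ ENNReal.ofReal (c * v) := by
  have hpt : ∀ r ∈ Ioi (0 : ℝ),
      ENNReal.ofReal (f r) ≤ (Ioc 0 v).indicator (fun _ => ENNReal.ofReal c) r := by
    intro r hr
    by_cases hrv : r ≤ v
    · have hmem : r ∈ Ioc 0 v := ⟨hr, hrv⟩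
      rw [indicator_of_mem hmem]
      exact ENNReal.ofReal_le_ofReal (hle r hmem)
    · rw [ENNReal.ofReal_of_nonpos (hzero r (not_le.1 hrv))]
      exact zero_le
  calc _ ≤ ∫⁻ r in Ioi 0, (Ioc 0 v).indicator (fun _ => ENNReal.ofReal c) r :=
        setLIntegral_mono' measurableSet_Ioi hpt
    _ ≤ ∫⁻ r, (Ioc 0 v).indicator (fun _ => ENNReal.ofReal c) r := setLIntegral_le_lintegral _ _
    _ = ENNReal.ofReal (c * v) := by
        rw [lintegral_indicator_const measurableSet_Ioc, Real.volume_Ioc, sub_zero,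
          ENNReal.ofReal_mul' hv]

theorem integrable_norm_rpow_neg_mul_exp_neg_mul_sq {E : Type*} [NormedAddCommGroup E]
    [NormedSpace ℝ E] [FiniteDimensional ℝ E] [MeasurableSpace E] [BorelSpace E] [Nontrivial E]
    (μ : Measure E) [μ.IsAddHaarMeasure] {α b : ℝ} (hα : α < Module.finrank ℝ E) (hb : 0 < b) :
    Integrable (fun x : E => ‖x‖ ^ (-α) * exp (-b * ‖x‖ ^ 2)) μ := by
  have hdim : 1 ≤ Module.finrank ℝ E := Module.finrank_pos
  rw [integrable_fun_norm_addHaar μ (f := fun y => y ^ (-α) * exp (-b * y ^ 2))]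
  refine (integrableOn_rpow_mul_exp_neg_mul_sq hb (s := Module.finrank ℝ E - 1 - α)
    (by linarith)).congr_fun (fun y (hy : 0 < y) => ?_) measurableSet_Ioi
  rw [smul_eq_mul, ← mul_assoc, ← rpow_natCast, ← rpow_add hy, Nat.cast_sub hdim]
  ring_nf

section HeatKernel

variable {d : ℕ}

theorem heatKer_nonneg {τ : ℝ} (hτ : 0 ≤ τ) (x : EuclideanSpace ℝ (Fin d)) :
    0 ≤ heatKer d τ x := by
  unfold heatKer
  positivity

theorem heatKer_le_of_le {T τ : ℝ} (hT : 0 < T) (hTτ : T ≤ τ) (x : EuclideanSpace ℝ (Fin d)) :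
    heatKer d τ x ≤ (4 * π * T) ^ (-(d : ℝ) / 2) := by
  have hτ : 0 < τ := hT.trans_le hTτ
  have hexp : exp (-‖x‖ ^ 2 / (4 * τ)) ≤ 1 :=
    exp_le_one_iff.2 (div_nonpos_of_nonpos_of_nonneg (neg_nonpos.2 (by positivity)) (by linarith))
  calc heatKer d τ x ≤ (4 * π * τ) ^ (-(d : ℝ) / 2) * 1 := by
        unfold heatKer
        gcongr
    _ ≤ (4 * π * T) ^ (-(d : ℝ) / 2) := by
        rw [mul_one]
        exact rpow_le_rpow_of_nonpos (by positivity) (by gcongr)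
          (div_nonpos_of_nonpos_of_nonneg (neg_nonpos.2 d.cast_nonneg) zero_le_two)

theorem heatKer_le_norm_rpow_neg_mul_exp {τ v : ℝ} (hτ : 0 < τ) (hτv : τ ≤ v)
    {x : EuclideanSpace ℝ (Fin d)} (hx : x ≠ 0) :
    heatKer d τ x ≤
      ((d : ℝ) / π) ^ ((d : ℝ) / 2) * (‖x‖ ^ (-(d : ℝ)) * exp (-(8 * v)⁻¹ * ‖x‖ ^ 2)) := by
  have hq : 0 < ‖x‖ ^ 2 := by positivity
  -- One half of the Gaussian factor absorbs `τ^{-d/2}`, the other is compared with its value at `v`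
  have hsplit : heatKer d τ x =
      (4 * π * τ) ^ (-(d : ℝ) / 2) * exp (-(‖x‖ ^ 2 / (8 * τ))) *
        exp (-(8 * τ)⁻¹ * ‖x‖ ^ 2) := by
    unfold heatKer
    rw [mul_assoc ((4 * π * τ) ^ (-(d : ℝ) / 2)), ← exp_add]
    congr 2
    field_simp
    ring
  have hsing : (4 * π * τ) ^ (-(d : ℝ) / 2) * exp (-(‖x‖ ^ 2 / (8 * τ))) ≤
      ((d : ℝ) / π) ^ ((d : ℝ) / 2) * ‖x‖ ^ (-(d : ℝ)) := by
    calc _ ≤ (4 * π * τ) ^ (-(d : ℝ) / 2) *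
          (((d : ℝ) / 2) / (‖x‖ ^ 2 / (8 * τ))) ^ ((d : ℝ) / 2) := by
          gcongr
          exact exp_neg_le_div_rpow (by positivity) (by positivity)
      _ = ((d : ℝ) / π * (‖x‖ ^ 2)⁻¹) ^ ((d : ℝ) / 2) := by
          rw [neg_div, rpow_neg (by positivity), ← div_eq_inv_mul,
            ← div_rpow (by positivity) (by positivity)]
          congr 1
          field_simp
          ring
      _ = ((d : ℝ) / π) ^ ((d : ℝ) / 2) * ‖x‖ ^ (-(d : ℝ)) := by
          rw [mul_rpow (by positivity) (by positivity), inv_rpow hq.le, ← rpow_natCast,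
            ← rpow_mul (norm_nonneg x), ← rpow_neg (norm_nonneg x)]
          ring_nf
  have hgauss : exp (-(8 * τ)⁻¹ * ‖x‖ ^ 2) ≤ exp (-(8 * v)⁻¹ * ‖x‖ ^ 2) := by
    gcongr
  rw [hsplit, ← mul_assoc]
  gcongr

end HeatKernel

/-- `R = heatPotential d u v` and `U_T = z • heatPotential d (s + T) (t + T)`; for `0 ≤ r ≤ b` this
is `∫_{max a r}^b p_{r' - r}(x) dr'`. -/
noncomputable def heatPotential (d : ℕ) (a b : ℝ) (x : EuclideanSpace ℝ (Fin d)) (r : ℝ) : ℝ :=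
  (Icc 0 a).indicator (fun _ => ∫ r' in a..b, heatKer d (r' - r) x) r +
    (Ioc a b).indicator (fun _ => ∫ r' in r..b, heatKer d (r' - r) x) r

section HeatPotential

variable {d : ℕ} {a b : ℝ} {x : EuclideanSpace ℝ (Fin d)} {r : ℝ}

theorem heatPotential_nonneg (hab : a ≤ b) : 0 ≤ heatPotential d a b x r := by
  unfold heatPotential
  refine add_nonneg (indicator_apply_nonneg fun hr => ?_) (indicator_apply_nonneg fun hr => ?_)
  · exact intervalIntegral.integral_nonneg hab fun y hy =>
      heatKer_nonneg (by linarith [hr.2, hy.1]) x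
  · exact intervalIntegral.integral_nonneg hr.2 fun y hy => heatKer_nonneg (by linarith [hy.1]) x

theorem heatPotential_eq_zero_of_lt (hab : a ≤ b) (hbr : b < r) :
    heatPotential d a b x r = 0 := by
  have hnot : r ∉ Icc 0 a ∧ r ∉ Ioc a b := by
    constructor <;> intro h <;> linarith [h.2]
  rw [heatPotential, indicator_of_notMem hnot.1, indicator_of_notMem hnot.2, add_zero]

theorem heatPotential_le_mul_sub {M : ℝ} (hab : a ≤ b) (hM : 0 ≤ M)
    (hbound : ∀ y ∈ Ioc (max a r) b, heatKer d (y - r) x ≤ M) :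
    heatPotential d a b x r ≤ M * (b - a) := by
  have hker : ∀ y ∈ Ioc (max a r) b, 0 ≤ heatKer d (y - r) x := fun y hy =>
    heatKer_nonneg (by linarith [le_max_right a r, hy.1]) x
  by_cases hra : r ∈ Icc 0 a
  · have hmax : max a r = a := max_eq_left hra.2
    rw [hmax] at hker hbound
    rw [heatPotential, indicator_of_mem hra, indicator_of_notMem fun h => by linarith [h.1, hra.2],
      add_zero]
    exact intervalIntegral.integral_le_mul_sub_of_le hab hker hbound
  · rw [heatPotential, indicator_of_notMem hra, zero_add]
    refine indicator_apply_le' (fun hrb => ?_) fun _ => mul_nonneg hM (sub_nonneg.2 hab)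
    have hmax : max a r = r := max_eq_right hrb.1.le
    rw [hmax] at hker hbound
    calc _ ≤ M * (b - r) := intervalIntegral.integral_le_mul_sub_of_le hrb.2 hker hbound
      _ ≤ M * (b - a) := by gcongr; exact hrb.1.le

theorem heatPotential_le_of_add_le {T : ℝ} (hT : 0 < T) (hrT : r + T ≤ a) (hab : a ≤ b) :
    heatPotential d a b x r ≤ (b - a) * (4 * π * T) ^ (-(d : ℝ) / 2) := by
  rw [mul_comm]
  exact heatPotential_le_mul_sub hab (by positivity) fun y hy =>
    heatKer_le_of_le hT (by linarith [le_max_left a r, hy.1]) x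

theorem heatPotential_rpow_le {β : ℝ} (hβ : 0 ≤ β) (hab : a ≤ b) (hr : 0 ≤ r) (hx : x ≠ 0) :
    heatPotential d a b x r ^ β ≤ ((b - a) * ((d : ℝ) / π) ^ ((d : ℝ) / 2)) ^ β *
      (‖x‖ ^ (-((d : ℝ) * β)) * exp (-(β * (8 * b)⁻¹) * ‖x‖ ^ 2)) := by
  have hle : heatPotential d a b x r ≤
      (b - a) * (((d : ℝ) / π) ^ ((d : ℝ) / 2) *
        (‖x‖ ^ (-(d : ℝ)) * exp (-(8 * b)⁻¹ * ‖x‖ ^ 2))) := by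
    rw [mul_comm]
    exact heatPotential_le_mul_sub hab (by positivity) fun y hy =>
      heatKer_le_norm_rpow_neg_mul_exp (by linarith [le_max_right a r, hy.1])
        (by linarith [hy.2]) hx
  calc _ ≤ _ := rpow_le_rpow (heatPotential_nonneg hab) hle hβ
    _ = _ := by
      rw [← mul_assoc, mul_rpow (mul_nonneg (sub_nonneg.2 hab) (by positivity)) (by positivity),
        Real.rpow_neg_mul_exp_rpow (norm_nonneg x)]

theorem setLIntegral_Ioi_heatPotential_gap_le {β u v s t z T : ℝ} (hβ0 : 0 < β) (hβ1 : β ≤ 1)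
    (huv : u ≤ v) (hv : 0 ≤ v) (hvs : v < s) (hst : s ≤ t) (hz : 0 ≤ z) (hT : 0 < T)
    (hx : x ≠ 0) :
    ∫⁻ r in Ioi 0, ENNReal.ofReal
        ((z * heatPotential d (s + T) (t + T) x r + heatPotential d u v x r) ^ (1 + β) -
          (z * heatPotential d (s + T) (t + T) x r) ^ (1 + β) -
          heatPotential d u v x r ^ (1 + β)) ≤
      ENNReal.ofReal ((1 + β) * (z * ((t - s) * (4 * π * T) ^ (-(d : ℝ) / 2))) *
        (((v - u) * ((d : ℝ) / π) ^ ((d : ℝ) / 2)) ^ β *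
          (‖x‖ ^ (-((d : ℝ) * β)) * exp (-(β * (8 * v)⁻¹) * ‖x‖ ^ 2))) * v) := by
  refine setLIntegral_Ioi_ofReal_le hv (fun r hr => ?_) (fun r hr => ?_)
  · have hU0 := heatPotential_nonneg (d := d) (x := x) (r := r) (by linarith : s + T ≤ t + T)
    have hR0 := heatPotential_nonneg (d := d) (x := x) (r := r) huv
    have hUle := heatPotential_le_of_add_le (d := d) (x := x) hT
      (by linarith [hr.2] : r + T ≤ s + T) (by linarith : s + T ≤ t + T)
    rw [add_sub_add_right_eq_sub] at hUle
    have hRle := heatPotential_rpow_le hβ0.le huv hr.1.le hx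
    have hRβ0 := rpow_nonneg hR0 β
    have hK0 : 0 ≤ (1 + β) * (z * ((t - s) * (4 * π * T) ^ (-(d : ℝ) / 2))) :=
      mul_nonneg (by positivity) (mul_nonneg hz (mul_nonneg (sub_nonneg.2 hst) (by positivity)))
    calc _ ≤ (1 + β) * (z * heatPotential d (s + T) (t + T) x r) *
          heatPotential d u v x r ^ β :=
          Real.add_rpow_sub_rpow_sub_rpow_le hβ0.le hβ1 (mul_nonneg hz hU0) hR0
      _ ≤ _ := by gcongr
  · rw [heatPotential_eq_zero_of_lt huv hr, add_zero, zero_rpow (by positivity : 1 + β ≠ 0)]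
    simp

end HeatPotential

theorem stmt9_general (d : ℕ) (hd : 1 ≤ d) (β : ℝ) (hβ0 : 0 < β) (hβ1 : β < 1)
    (u v s t z : ℝ) (hu : 0 ≤ u) (huv : u < v) (hvs : v < s) (hst : s < t) (hz : 0 < z)
    (U : ℝ → EuclideanSpace ℝ (Fin d) → ℝ → ℝ)
    (hU : ∀ T x r, U T x r = z *
      ((Set.Icc (0:ℝ) (s + T)).indicator
          (fun _ => ∫ r' in (s + T)..(t + T), heatKer d (r' - r) x) r +
        (Set.Ioc (s + T) (t + T)).indicator
          (fun _ => ∫ r' in r..(t + T), heatKer d (r' - r) x) r))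
    (R : EuclideanSpace ℝ (Fin d) → ℝ → ℝ)
    (hR : ∀ x r, R x r =
      (Set.Icc (0:ℝ) u).indicator (fun _ => ∫ r' in u..v, heatKer d (r' - r) x) r +
        (Set.Ioc u v).indicator (fun _ => ∫ r' in r..v, heatKer d (r' - r) x) r) :
    ∃ C : ℝ, 0 < C ∧ ∀ T : ℝ, 1 ≤ T →
      ∫⁻ x : EuclideanSpace ℝ (Fin d), ∫⁻ r in Set.Ioi (0:ℝ),
          ENNReal.ofReal
            ((U T x r + R x r) ^ (1 + β) - (U T x r) ^ (1 + β) - (R x r) ^ (1 + β))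
        ≤ ENNReal.ofReal (C * T ^ (-(d : ℝ) / 2)) := by
  have hU' : ∀ T x r, U T x r = z * heatPotential d (s + T) (t + T) x r := hU
  have hR' : ∀ x r, R x r = heatPotential d u v x r := hR
  have hv : 0 < v := hu.trans_lt huv
  have : Nontrivial (EuclideanSpace ℝ (Fin d)) :=
    Module.nontrivial_of_finrank_pos (R := ℝ) (by rw [finrank_euclideanSpace_fin]; exact hd)
  set h : EuclideanSpace ℝ (Fin d) → ℝ :=
    fun x => ‖x‖ ^ (-((d : ℝ) * β)) * exp (-(β * (8 * v)⁻¹) * ‖x‖ ^ 2)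
  have hh : Integrable h := integrable_norm_rpow_neg_mul_exp_neg_mul_sq volume
    (by simp only [finrank_euclideanSpace_fin]; nlinarith [(Nat.one_le_cast (α := ℝ)).2 hd])
    (by positivity)
  set κ : ℝ := (1 + β) * (z * (t - s) * (4 * π) ^ (-(d : ℝ) / 2)) *
    ((v - u) * ((d : ℝ) / π) ^ ((d : ℝ) / 2)) ^ β * v
  refine ⟨max (κ * ∫ x, h x) 1, by positivity, fun T hT => ?_⟩
  have hT0 : 0 < T := by linarith
  calc _ ≤ ∫⁻ x, ENNReal.ofReal (κ * T ^ (-(d : ℝ) / 2) * h x) := by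
        refine lintegral_mono_ae ((volume.ae_ne 0).mono fun x hx => ?_)
        simp only [hU', hR']
        refine (setLIntegral_Ioi_heatPotential_gap_le hβ0 hβ1.le huv.le hv.le hvs hst.le hz.le
          hT0 hx).trans_eq (congrArg ENNReal.ofReal ?_)
        rw [mul_rpow (by positivity) hT0.le]
        ring
    _ = ENNReal.ofReal (κ * T ^ (-(d : ℝ) / 2) * ∫ x, h x) := by
        rw [← integral_const_mul, ofReal_integral_eq_lintegral_ofReal (hh.const_mul _)
          (ae_of_all _ fun x => by positivity)]
    _ ≤ _ := ENNReal.ofReal_le_ofReal (by rw [mul_right_comm]; gcongr; exact le_max_left _ _)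

/-- Upper bound (4.3) for `D_T^+` in the Brownian case `α = 2`, `2/β < d < 2(1+β)/β`:
`∫_{ℝ^d}∫_0^∞ ((U_T+R)^{1+β} − U_T^{1+β} − R^{1+β}) dr dx ≤ C T^{−d/2}` for all `T ≥ 1`. -/
theorem stmt9 (d : ℕ) (hd : 1 ≤ d) (β : ℝ) (hβ0 : 0 < β) (hβ1 : β < 1)
    (hdim1 : 2 / β < d) (hdim2 : (d : ℝ) < 2 * (1 + β) / β)
    (u v s t z : ℝ) (hu : 0 ≤ u) (huv : u < v) (hvs : v < s) (hst : s < t) (hz : 0 < z)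
    (U : ℝ → EuclideanSpace ℝ (Fin d) → ℝ → ℝ)
    (hU : ∀ T x r, U T x r = z *
      ((Set.Icc (0:ℝ) (s + T)).indicator
          (fun _ => ∫ r' in (s + T)..(t + T), heatKer d (r' - r) x) r +
        (Set.Ioc (s + T) (t + T)).indicator
          (fun _ => ∫ r' in r..(t + T), heatKer d (r' - r) x) r))
    (R : EuclideanSpace ℝ (Fin d) → ℝ → ℝ)
    (hR : ∀ x r, R x r =
      (Set.Icc (0:ℝ) u).indicator (fun _ => ∫ r' in u..v, heatKer d (r' - r) x) r +
        (Set.Ioc u v).indicator (fun _ => ∫ r' in r..v, heatKer d (r' - r) x) r) :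
    ∃ C : ℝ, 0 < C ∧ ∀ T : ℝ, 1 ≤ T →
      ∫⁻ x : EuclideanSpace ℝ (Fin d), ∫⁻ r in Set.Ioi (0:ℝ),
          ENNReal.ofReal
            ((U T x r + R x r) ^ (1 + β) - (U T x r) ^ (1 + β) - (R x r) ^ (1 + β))
        ≤ ENNReal.ofReal (C * T ^ (-(d : ℝ) / 2)) :=
  stmt9_general d hd β hβ0 hβ1 u v s t z hu huv hvs hst hz U hU R hR
end

section
/- Let d ≥ 1 be an integer, 0 < α < 2, 0 < β < 1 with α/β < d < α(1+β)/β. Let q : ℝ^d → [0,∞) be measurable with c₁/(1+‖x‖^{d+α}) ≤ q(x) ≤ c₂/(1+‖x‖^{d+α}) for some constants c₁, c₂ > 0, and set p_t(x) = t^{−d/α} q(t^{−1/α} x) for t > 0. Fix 0 ≤ u < v < s < t and z > 0, and for T > 0 define U_T(x,r) = z( 𝟙_{[0,s+T]}(r) ∫_{s+T}^{t+T} p_{r'−r}(x) dr' + 𝟙_{(s+T,t+T]}(r) ∫_r^{t+T} p_{r'−r}(x) dr' ) and R(x,r) = 𝟙_{[0,u]}(r) ∫_u^v p_{r'−r}(x)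 dr' + 𝟙_{(u,v]}(r) ∫_r^v p_{r'−r}(x) dr'. Then there exist C > 0 and T₀ > 0 such that for all T ≥ T₀: ∫_{ℝ^d} ∫_0^∞ ( (U_T+R)^{1+β} − U_T^{1+β} − R^{1+β} )(x,r) dr dx ≥ C·T^{−d/α}. -/
/-!
Fix `u < m < v` and a ball `A` of points with `0 < ‖x‖ ≤ 1`. For `x ∈ A` and `r ∈ (u, m]` the
two-sided bounds on `q` give `R(x, r) ≥ ε > 0` and `c T^{-d/α} ≤ U_T(x, r) → 0` uniformly (away
from `x = 0` the upper bound also makes `r' ↦ p_{r' - r}(x)` bounded, hence integrable). Once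
`U_T^β ≤ R^β / 2`, the tangent line of `y ↦ y^{1+β}` at `R` gives
`(U_T + R)^{1+β} - U_T^{1+β} - R^{1+β} ≥ U_T R^β / 2 ≥ (c ε^β / 2) T^{-d/α}`, and integrating
over `A × (u, m]` proves the bound.
-/

open MeasureTheory

/-- The density at time `t` of a self-similar transition kernel on `ℝ^d`:
`p_t(x) = t^{−d/α} q(t^{−1/α} x)`. -/
noncomputable def pker (d : ℕ) (α : ℝ) (q : EuclideanSpace ℝ (Fin d) → ℝ) (t : ℝ)
    (x : EuclideanSpace ℝ (Fin d)) : ℝ :=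
  t ^ (-(d : ℝ) / α) * q ((t ^ (-(1 : ℝ) / α)) • x)

open Set Filter

theorem Real.rpow_add_mul_rpow_sub_one_le_add_rpow {a b p : ℝ} (ha : 0 < a) (hb : 0 ≤ b)
    (hp : 1 ≤ p) : a ^ p + p * a ^ (p - 1) * b ≤ (a + b) ^ p := by
  have hbern := one_add_mul_self_le_rpow_one_add
    (neg_one_lt_zero.trans_le (div_nonneg hb ha.le)).le hp
  have hsplit : (a + b) ^ p = a ^ p * (1 + b / a) ^ p := by
    rw [← Real.mul_rpow ha.le (by positivity)]
    congr 1
    field_simp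
  calc a ^ p + p * a ^ (p - 1) * b = a ^ p * (1 + p * (b / a)) := by
        rw [Real.rpow_sub_one ha.ne']
        field_simp
    _ ≤ (a + b) ^ p := hsplit ▸ mul_le_mul_of_nonneg_left hbern (by positivity)

theorem Real.mul_rpow_div_two_le_add_rpow_sub {a b β : ℝ} (hβ : 0 ≤ β) (ha : 0 < a)
    (hb : 0 ≤ b) (hba : b ^ β ≤ a ^ β / 2) :
    b * (a ^ β / 2) ≤ (b + a) ^ (1 + β) - b ^ (1 + β) - a ^ (1 + β) := by
  have htangent := Real.rpow_add_mul_rpow_sub_one_le_add_rpow ha hb (by linarith : 1 ≤ 1 + β)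
  rw [add_sub_cancel_left, add_comm a] at htangent
  have hb' : b ^ (1 + β) = b * b ^ β := by
    rw [Real.rpow_add' hb (by linarith), Real.rpow_one]
  have : b * b ^ β ≤ b * (a ^ β / 2) := mul_le_mul_of_nonneg_left hba hb
  nlinarith [mul_nonneg (mul_nonneg hβ (Real.rpow_nonneg ha.le β)) hb]

theorem Real.mul_rpow_div_two_le_add_rpow_sub_of_le {a b c δ ε β : ℝ} (hβ : 0 ≤ β)
    (hc : 0 ≤ c) (hε : 0 < ε) (hδε : δ ^ β ≤ ε ^ β / 2) (hcb : c ≤ b) (hbδ : b ≤ δ)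
    (hεa : ε ≤ a) : c * (ε ^ β / 2) ≤ (b + a) ^ (1 + β) - b ^ (1 + β) - a ^ (1 + β) := by
  have hb : 0 ≤ b := hc.trans hcb
  calc c * (ε ^ β / 2) ≤ b * (a ^ β / 2) := by gcongr
    _ ≤ _ := Real.mul_rpow_div_two_le_add_rpow_sub hβ (hε.trans_le hεa) hb <|
        calc b ^ β ≤ δ ^ β := by gcongr
          _ ≤ ε ^ β / 2 := hδε
          _ ≤ a ^ β / 2 := by gcongr

theorem intervalIntegral.sub_mul_le_integral {f : ℝ → ℝ} {a b c : ℝ} (hab : a ≤ b)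
    (hf : IntervalIntegrable f volume a b) (h : ∀ x ∈ Icc a b, c ≤ f x) :
    (b - a) * c ≤ ∫ x in a..b, f x := by
  simpa using intervalIntegral.integral_mono_on hab intervalIntegrable_const hf h

theorem ofReal_mul_measure_mul_le_lintegral {X Y : Type*} [MeasurableSpace X]
    [MeasurableSpace Y] {μ : Measure X} {ν : Measure Y} {A : Set X} {S I : Set Y}
    (hA : MeasurableSet A) (hS : MeasurableSet S) (hSI : S ⊆ I) {f : X → Y → ℝ} {c : ℝ}
    (hf : ∀ x ∈ A, ∀ y ∈ S, c ≤ f x y) :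
    ENNReal.ofReal c * μ A * ν S ≤ ∫⁻ x, ∫⁻ y in I, ENNReal.ofReal (f x y) ∂ν ∂μ :=
  calc ENNReal.ofReal c * μ A * ν S = ∫⁻ _ in A, ∫⁻ _ in S, ENNReal.ofReal c ∂ν ∂μ := by
        simp only [setLIntegral_const]; ring
    _ ≤ ∫⁻ x in A, ∫⁻ y in S, ENNReal.ofReal (f x y) ∂ν ∂μ :=
        setLIntegral_mono' hA fun x hx => setLIntegral_mono' hS fun y hy =>
          ENNReal.ofReal_le_ofReal (hf x hx y hy)
    _ ≤ ∫⁻ x, ∫⁻ y in I, ENNReal.ofReal (f x y) ∂ν ∂μ :=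
        (setLIntegral_le_lintegral A _).trans (lintegral_mono fun x => lintegral_mono_set hSI)

theorem exists_ball_subset_closedBall_diff_zero {E : Type*} [NormedAddCommGroup E]
    [NormedSpace ℝ E] [Nontrivial E] :
    ∃ x₀ : E, Metric.ball x₀ (1 / 4) ⊆ Metric.closedBall 0 1 \ {0} := by
  obtain ⟨x₀, hx₀⟩ := exists_norm_eq E (by norm_num : (0 : ℝ) ≤ 3 / 4)
  refine ⟨x₀, fun x hx => ?_⟩
  have := abs_le.1 ((abs_norm_sub_norm_le x x₀).trans (mem_ball_iff_norm.1 hx).le)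
  exact ⟨mem_closedBall_zero_iff.2 (by linarith), fun h => by simp_all; linarith⟩

section pker

variable {d : ℕ} {α : ℝ} {q : EuclideanSpace ℝ (Fin d) → ℝ} {c₁ c₂ : ℝ}

theorem measurable_pker_time (hqm : Measurable q) (x : EuclideanSpace ℝ (Fin d)) :
    Measurable fun τ => pker d α q τ x :=
  (measurable_id.pow_const _).mul (hqm.comp ((measurable_id.pow_const _).smul_const x))

theorem pker_nonneg (hq0 : ∀ x, 0 ≤ q x) {τ : ℝ} (hτ : 0 ≤ τ)
    (x : EuclideanSpace ℝ (Fin d)) : 0 ≤ pker d α q τ x :=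
  mul_nonneg (Real.rpow_nonneg hτ _) (hq0 _)

theorem pker_le_rpow (hc₂ : 0 ≤ c₂) (hq2 : ∀ x, q x ≤ c₂ / (1 + ‖x‖ ^ ((d : ℝ) + α)))
    {τ : ℝ} (hτ : 0 ≤ τ) (x : EuclideanSpace ℝ (Fin d)) :
    pker d α q τ x ≤ c₂ * τ ^ (-(d : ℝ) / α) := by
  have hq : q (τ ^ (-(1 : ℝ) / α) • x) ≤ c₂ :=
    (hq2 _).trans (div_le_self hc₂ (le_add_of_nonneg_right (by positivity)))
  rw [pker, mul_comm c₂]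
  exact mul_le_mul_of_nonneg_left hq (by positivity)

theorem pker_le_mul_rpow_norm (hα : 0 < α) (hc₂ : 0 ≤ c₂)
    (hq2 : ∀ x, q x ≤ c₂ / (1 + ‖x‖ ^ ((d : ℝ) + α))) {τ : ℝ} (hτ : 0 < τ)
    {x : EuclideanSpace ℝ (Fin d)} (hx : x ≠ 0) :
    pker d α q τ x ≤ c₂ * τ * ‖x‖ ^ (-((d : ℝ) + α)) := by
  set e : ℝ := d + α
  have hy : 0 < ‖τ ^ (-(1 : ℝ) / α) • x‖ := norm_pos_iff.2 (smul_ne_zero (by positivity) hx)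
  have hqy : q (τ ^ (-(1 : ℝ) / α) • x) ≤ c₂ * τ ^ (e / α) * ‖x‖ ^ (-e) :=
    calc q (τ ^ (-(1 : ℝ) / α) • x) ≤ c₂ / ‖τ ^ (-(1 : ℝ) / α) • x‖ ^ e :=
          (hq2 _).trans (div_le_div_of_nonneg_left hc₂ (by positivity) (by linarith))
      _ = c₂ * τ ^ (e / α) * ‖x‖ ^ (-e) := by
          rw [norm_smul, Real.norm_of_nonneg (by positivity), Real.mul_rpow (by positivity)
            (norm_nonneg _), ← Real.rpow_mul hτ.le, Real.rpow_neg (norm_nonneg _)]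
          field_simp
          rw [mul_assoc, ← Real.rpow_add hτ, neg_add_cancel, Real.rpow_zero, mul_one]
  calc pker d α q τ x ≤ τ ^ (-(d : ℝ) / α) * (c₂ * τ ^ (e / α) * ‖x‖ ^ (-e)) :=
        mul_le_mul_of_nonneg_left hqy (by positivity)
    _ = c₂ * (τ ^ (-(d : ℝ) / α) * τ ^ (e / α)) * ‖x‖ ^ (-e) := by ring
    _ = c₂ * τ * ‖x‖ ^ (-e) := by
        rw [← Real.rpow_add hτ, show -(d : ℝ) / α + e / α = 1 by field_simp; ring,
          Real.rpow_one]

theorem exists_pos_mul_rpow_le_pker (hα : 0 < α) (hc₁ : 0 < c₁)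
    (hq1 : ∀ x, c₁ / (1 + ‖x‖ ^ ((d : ℝ) + α)) ≤ q x) {τ₀ : ℝ} (hτ₀ : 0 < τ₀) :
    ∃ c > 0, ∀ τ τ₁ : ℝ, ∀ x : EuclideanSpace ℝ (Fin d), τ₀ ≤ τ → τ ≤ τ₁ → ‖x‖ ≤ 1 →
      c * τ₁ ^ (-(d : ℝ) / α) ≤ pker d α q τ x := by
  have hexp : ∀ e : ℝ, 0 ≤ e → -e / α ≤ 0 := fun e he =>
    div_nonpos_of_nonpos_of_nonneg (neg_nonpos.2 he) hα.le
  refine ⟨c₁ / (1 + (τ₀ ^ (-(1 : ℝ) / α)) ^ ((d : ℝ) + α)), by positivity,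
    fun τ τ₁ x hτ₀τ hττ₁ hx => ?_⟩
  have hτ : 0 < τ := hτ₀.trans_le hτ₀τ
  have hnorm : ‖τ ^ (-(1 : ℝ) / α) • x‖ ≤ τ₀ ^ (-(1 : ℝ) / α) := by
    rw [norm_smul, Real.norm_of_nonneg (by positivity)]
    calc τ ^ (-(1 : ℝ) / α) * ‖x‖ ≤ τ ^ (-(1 : ℝ) / α) :=
          mul_le_of_le_one_right (by positivity) hx
      _ ≤ τ₀ ^ (-(1 : ℝ) / α) := Real.rpow_le_rpow_of_nonpos hτ₀ hτ₀τ (hexp 1 zero_le_one)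
  have hq : c₁ / (1 + (τ₀ ^ (-(1 : ℝ) / α)) ^ ((d : ℝ) + α)) ≤ q (τ ^ (-(1 : ℝ) / α) • x) :=
    (div_le_div_of_nonneg_left hc₁.le (by positivity) (by gcongr)).trans (hq1 _)
  rw [pker, mul_comm]
  exact mul_le_mul (Real.rpow_le_rpow_of_nonpos hτ hττ₁ (hexp d d.cast_nonneg)) hq
    (by positivity) (by positivity)

theorem intervalIntegrable_pker_sub (hα : 0 < α) (hc₂ : 0 ≤ c₂) (hqm : Measurable q)
    (hq0 : ∀ x, 0 ≤ q x) (hq2 : ∀ x, q x ≤ c₂ / (1 + ‖x‖ ^ ((d : ℝ) + α)))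
    {a b r : ℝ} (hra : r ≤ a) (hab : a ≤ b) {x : EuclideanSpace ℝ (Fin d)} (hx : x ≠ 0) :
    IntervalIntegrable (fun r' => pker d α q (r' - r) x) volume a b := by
  refine (intervalIntegrable_const (c := c₂ * (b - r) * ‖x‖ ^ (-((d : ℝ) + α)))).mono_fun'
    ((measurable_pker_time hqm x).comp (measurable_sub_const r)).aestronglyMeasurable ?_
  rw [uIoc_of_le hab]
  refine ae_restrict_of_forall_mem measurableSet_Ioc fun r' hr' => ?_
  dsimp only
  have hτ : 0 < r' - r := by linarith [hr'.1]
  rw [Real.norm_of_nonneg (pker_nonneg hq0 hτ.le x)]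
  exact (pker_le_mul_rpow_norm hα hc₂ hq2 hτ hx).trans (by gcongr; linarith [hr'.2])

end pker

/-- `∫_{max a r}^b p_{r' - r}(x) dr'` for `0 ≤ r ≤ b`: `R = pkerWindow u v` and
`U_T = z • pkerWindow (s + T) (t + T)`. -/
noncomputable def pkerWindow (d : ℕ) (α : ℝ) (q : EuclideanSpace ℝ (Fin d) → ℝ) (a b : ℝ)
    (x : EuclideanSpace ℝ (Fin d)) (r : ℝ) : ℝ :=
  (Icc (0 : ℝ) a).indicator (fun _ => ∫ r' in a..b, pker d α q (r' - r) x) r +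
    (Ioc a b).indicator (fun _ => ∫ r' in r..b, pker d α q (r' - r) x) r

section pkerWindow

variable {d : ℕ} {α : ℝ} {q : EuclideanSpace ℝ (Fin d) → ℝ} {c₁ c₂ : ℝ}

theorem pkerWindow_of_mem_Icc {a b r : ℝ} (hr : r ∈ Icc 0 a) (x : EuclideanSpace ℝ (Fin d)) :
    pkerWindow d α q a b x r = ∫ r' in a..b, pker d α q (r' - r) x := by
  rw [pkerWindow, indicator_of_mem hr, indicator_of_notMem fun h => (not_lt.2 hr.2) h.1,
    add_zero]

theorem pkerWindow_of_mem_Ioc {a b r : ℝ} (hr : r ∈ Ioc a b) (x : EuclideanSpace ℝ (Fin d)) :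
    pkerWindow d α q a b x r = ∫ r' in r..b, pker d α q (r' - r) x := by
  rw [pkerWindow, indicator_of_notMem fun h => (not_lt.2 h.2) hr.1, indicator_of_mem hr,
    zero_add]

theorem exists_pos_le_pkerWindow (hα : 0 < α) (hc₁ : 0 < c₁) (hc₂ : 0 ≤ c₂)
    (hqm : Measurable q) (hq0 : ∀ x, 0 ≤ q x)
    (hq1 : ∀ x, c₁ / (1 + ‖x‖ ^ ((d : ℝ) + α)) ≤ q x)
    (hq2 : ∀ x, q x ≤ c₂ / (1 + ‖x‖ ^ ((d : ℝ) + α))) {u w v : ℝ} (huw : u < w)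
    (hwv : w < v) :
    ∃ ε > 0, ∀ x : EuclideanSpace ℝ (Fin d), x ≠ 0 → ‖x‖ ≤ 1 →
      ∀ r ∈ Ioc u w, ε ≤ pkerWindow d α q u v x r := by
  obtain ⟨w', hww', hw'v⟩ := exists_between hwv
  obtain ⟨c, hc, hpker⟩ := exists_pos_mul_rpow_le_pker hα hc₁ hq1 (by linarith : 0 < w' - w)
  refine ⟨(v - w') * (c * (v - u) ^ (-(d : ℝ) / α)), by
    have : 0 < v - w' := by linarith
    have : 0 < v - u := by linarith
    positivity, fun x hx0 hx1 r hr => ?_⟩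
  rw [pkerWindow_of_mem_Ioc ⟨hr.1, hr.2.trans hwv.le⟩]
  calc (v - w') * (c * (v - u) ^ (-(d : ℝ) / α))
      ≤ ∫ r' in w'..v, pker d α q (r' - r) x :=
        intervalIntegral.sub_mul_le_integral hw'v.le
          (intervalIntegrable_pker_sub hα hc₂ hqm hq0 hq2 (by linarith [hr.2]) hw'v.le hx0)
          fun r' hr' => hpker _ _ x (by linarith [hr.2, hr'.1]) (by linarith [hr.1, hr'.2]) hx1
    _ ≤ ∫ r' in r..v, pker d α q (r' - r) x :=
        intervalIntegral.integral_mono_interval (by linarith [hr.2]) hw'v.le le_rfl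
          (ae_restrict_of_forall_mem measurableSet_Ioc fun r' hr' =>
            pker_nonneg hq0 (by linarith [hr'.1]) x)
          (intervalIntegrable_pker_sub hα hc₂ hqm hq0 hq2 le_rfl (by linarith [hr.2]) hx0)

theorem exists_pos_mul_rpow_le_pkerWindow_add (hα : 0 < α) (hc₁ : 0 < c₁) (hc₂ : 0 ≤ c₂)
    (hqm : Measurable q) (hq0 : ∀ x, 0 ≤ q x)
    (hq1 : ∀ x, c₁ / (1 + ‖x‖ ^ ((d : ℝ) + α)) ≤ q x)
    (hq2 : ∀ x, q x ≤ c₂ / (1 + ‖x‖ ^ ((d : ℝ) + α))) {w s t : ℝ} (hws : w < s)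
    (hst : s < t) :
    ∃ c > 0, ∀ T, t ≤ T → ∀ x : EuclideanSpace ℝ (Fin d), x ≠ 0 → ‖x‖ ≤ 1 →
      ∀ r ∈ Icc 0 w, c * T ^ (-(d : ℝ) / α) ≤ pkerWindow d α q (s + T) (t + T) x r := by
  obtain ⟨c, hc, hpker⟩ := exists_pos_mul_rpow_le_pker hα hc₁ hq1 (by linarith : 0 < s - w)
  refine ⟨(t - s) * c * 2 ^ (-(d : ℝ) / α), by
    have : 0 < t - s := by linarith
    positivity, fun T hT x hx0 hx1 r hr => ?_⟩
  rw [pkerWindow_of_mem_Icc ⟨hr.1, by linarith [hr.1, hr.2]⟩]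
  calc (t - s) * c * 2 ^ (-(d : ℝ) / α) * T ^ (-(d : ℝ) / α)
      = (t + T - (s + T)) * (c * (2 * T) ^ (-(d : ℝ) / α)) := by
        rw [Real.mul_rpow zero_le_two (by linarith [hr.1, hr.2])]
        ring
    _ ≤ ∫ r' in (s + T)..(t + T), pker d α q (r' - r) x :=
        intervalIntegral.sub_mul_le_integral (by linarith)
          (intervalIntegrable_pker_sub hα hc₂ hqm hq0 hq2 (by linarith [hr.1, hr.2])
            (by linarith) hx0)
          fun r' hr' => hpker _ _ x (by linarith [hr.1, hr.2, hr'.1])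
            (by linarith [hr.1, hr'.2]) hx1

theorem pkerWindow_add_le (hα : 0 < α) (hc₂ : 0 ≤ c₂) (hq0 : ∀ x, 0 ≤ q x)
    (hq2 : ∀ x, q x ≤ c₂ / (1 + ‖x‖ ^ ((d : ℝ) + α))) {w s t T r : ℝ} (hws : w < s)
    (hst : s ≤ t) (hT : 0 ≤ T) (hr : r ∈ Icc 0 w) (x : EuclideanSpace ℝ (Fin d)) :
    pkerWindow d α q (s + T) (t + T) x r ≤ c₂ * (s + T - w) ^ (-(d : ℝ) / α) * (t - s) := by
  rw [pkerWindow_of_mem_Icc ⟨hr.1, by linarith [hr.2]⟩]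
  have hbound : ∀ r' ∈ uIoc (s + T) (t + T),
      ‖pker d α q (r' - r) x‖ ≤ c₂ * (s + T - w) ^ (-(d : ℝ) / α) := fun r' hr' => by
    rw [uIoc_of_le (by linarith)] at hr'
    have hτ : s + T - w ≤ r' - r := by linarith [hr.2, hr'.1]
    rw [Real.norm_of_nonneg (pker_nonneg hq0 (by linarith) x)]
    exact (pker_le_rpow hc₂ hq2 (by linarith) x).trans (mul_le_mul_of_nonneg_left
      (Real.rpow_le_rpow_of_nonpos (by linarith) hτ
        (div_nonpos_of_nonpos_of_nonneg (by simp) hα.le)) hc₂)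
  calc ∫ r' in (s + T)..(t + T), pker d α q (r' - r) x
      ≤ ‖∫ r' in (s + T)..(t + T), pker d α q (r' - r) x‖ := Real.le_norm_self _
    _ ≤ c₂ * (s + T - w) ^ (-(d : ℝ) / α) * |t + T - (s + T)| :=
        intervalIntegral.norm_integral_le_of_norm_le_const hbound
    _ = c₂ * (s + T - w) ^ (-(d : ℝ) / α) * (t - s) := by
        rw [add_sub_add_right_eq_sub, abs_of_nonneg (by linarith)]

theorem eventually_pkerWindow_add_le (hd : 1 ≤ d) (hα : 0 < α) (hc₂ : 0 ≤ c₂)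
    (hq0 : ∀ x, 0 ≤ q x) (hq2 : ∀ x, q x ≤ c₂ / (1 + ‖x‖ ^ ((d : ℝ) + α))) {w s t δ : ℝ}
    (hws : w < s) (hst : s ≤ t) (hδ : 0 < δ) :
    ∀ᶠ T in atTop, ∀ x : EuclideanSpace ℝ (Fin d), ∀ r ∈ Icc 0 w,
      pkerWindow d α q (s + T) (t + T) x r ≤ δ := by
  have hdecay : Tendsto (fun T => c₂ * (s + T - w) ^ (-(d : ℝ) / α) * (t - s)) atTop
      (nhds 0) := by
    have hpos : 0 < (d : ℝ) / α := div_pos (by exact_mod_cast hd) hα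
    simpa [neg_div, sub_eq_add_neg] using ((tendsto_rpow_neg_atTop hpos).comp
      (tendsto_atTop_add_const_right _ (-w)
        (tendsto_atTop_add_const_left _ s tendsto_id))).const_mul c₂ |>.mul_const (t - s)
  filter_upwards [hdecay.eventually_le_const hδ, eventually_ge_atTop 0] with T hTδ hT x r hr
  exact (pkerWindow_add_le hα hc₂ hq0 hq2 hws hst hT hr x).trans hTδ

theorem exists_pos_eventually_mul_rpow_le_codifference (hd : 1 ≤ d) (hα : 0 < α)
    {β : ℝ} (hβ : 0 < β) (hc₁ : 0 < c₁) (hc₂ : 0 ≤ c₂) (hqm : Measurable q) (hq0 : ∀ x, 0 ≤ q x)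
    (hq1 : ∀ x, c₁ / (1 + ‖x‖ ^ ((d : ℝ) + α)) ≤ q x)
    (hq2 : ∀ x, q x ≤ c₂ / (1 + ‖x‖ ^ ((d : ℝ) + α))) {u w v s t z : ℝ} (hu : 0 ≤ u)
    (huw : u < w) (hwv : w < v) (hvs : v < s) (hst : s < t) (hz : 0 < z) :
    ∃ C > 0, ∀ᶠ T in atTop, ∀ x : EuclideanSpace ℝ (Fin d), x ≠ 0 → ‖x‖ ≤ 1 →
      ∀ r ∈ Ioc u w, C * T ^ (-(d : ℝ) / α) ≤
        (z * pkerWindow d α q (s + T) (t + T) x r + pkerWindow d α q u v x r) ^ (1 + β) -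
          (z * pkerWindow d α q (s + T) (t + T) x r) ^ (1 + β) -
            pkerWindow d α q u v x r ^ (1 + β) := by
  obtain ⟨ε, hε, hRε⟩ := exists_pos_le_pkerWindow hα hc₁ hc₂ hqm hq0 hq1 hq2 huw hwv
  obtain ⟨c, hc, hUc⟩ := exists_pos_mul_rpow_le_pkerWindow_add hα hc₁ hc₂ hqm hq0 hq1 hq2
    (hwv.trans hvs) hst
  refine ⟨z * c * (ε ^ β / 2), by positivity, ?_⟩
  filter_upwards [eventually_pkerWindow_add_le hd hα hc₂ hq0 hq2 (hwv.trans hvs) hst.le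
    (by positivity : 0 < (ε ^ β / 2) ^ β⁻¹ / z), eventually_ge_atTop t]
    with T hTδ htT x hx0 hx1 r hr
  have hr0 : r ∈ Icc 0 w := ⟨hu.trans hr.1.le, hr.2⟩
  have hT : 0 < T := by linarith [hr.1]
  rw [mul_right_comm]
  refine Real.mul_rpow_div_two_le_add_rpow_sub_of_le hβ.le (by positivity) hε
    (Real.rpow_inv_rpow (by positivity) hβ.ne').le ?_ ?_ (hRε x hx0 hx1 r hr)
  · rw [mul_assoc]
    exact mul_le_mul_of_nonneg_left (hUc T htT x hx0 hx1 r hr0) hz.le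
  · rw [← le_div_iff₀' hz]
    exact hTδ x r hr0

end pkerWindow

theorem stmt11_general (d : ℕ) (hd : 1 ≤ d) (α β : ℝ) (hα0 : 0 < α)
    (hβ0 : 0 < β)
    (q : EuclideanSpace ℝ (Fin d) → ℝ) (hqm : Measurable q) (hq0 : ∀ x, 0 ≤ q x)
    (c₁ c₂ : ℝ) (hc₁ : 0 < c₁) (hc₂ : 0 < c₂)
    (hq1 : ∀ x, c₁ / (1 + ‖x‖ ^ ((d : ℝ) + α)) ≤ q x)
    (hq2 : ∀ x, q x ≤ c₂ / (1 + ‖x‖ ^ ((d : ℝ) + α)))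
    (u v s t z : ℝ) (hu : 0 ≤ u) (huv : u < v) (hvs : v < s) (hst : s < t) (hz : 0 < z)
    (U : ℝ → EuclideanSpace ℝ (Fin d) → ℝ → ℝ)
    (hU : ∀ T x r, U T x r = z *
      ((Set.Icc (0:ℝ) (s + T)).indicator
          (fun _ => ∫ r' in (s + T)..(t + T), pker d α q (r' - r) x) r +
        (Set.Ioc (s + T) (t + T)).indicator
          (fun _ => ∫ r' in r..(t + T), pker d α q (r' - r) x) r))
    (R : EuclideanSpace ℝ (Fin d) → ℝ → ℝ)
    (hR : ∀ x r, R x r =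
      (Set.Icc (0:ℝ) u).indicator (fun _ => ∫ r' in u..v, pker d α q (r' - r) x) r +
        (Set.Ioc u v).indicator (fun _ => ∫ r' in r..v, pker d α q (r' - r) x) r) :
    ∃ C : ℝ, 0 < C ∧ ∃ T₀ : ℝ, 0 < T₀ ∧ ∀ T : ℝ, T₀ ≤ T →
      ENNReal.ofReal (C * T ^ (-(d : ℝ) / α)) ≤
        ∫⁻ x : EuclideanSpace ℝ (Fin d), ∫⁻ r in Set.Ioi (0:ℝ),
          ENNReal.ofReal
            ((U T x r + R x r) ^ (1 + β) - (U T x r) ^ (1 + β) - (R x r) ^ (1 + β)) := by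
  have hU' : ∀ T x r, U T x r = z * pkerWindow d α q (s + T) (t + T) x r := hU
  have hR' : ∀ x r, R x r = pkerWindow d α q u v x r := hR
  obtain ⟨m, hum, hmv⟩ := exists_between huv
  obtain ⟨C, hC, hCT⟩ := exists_pos_eventually_mul_rpow_le_codifference hd hα0 hβ0 hc₁ hc₂.le
    hqm hq0 hq1 hq2 hu hum hmv hvs hst hz
  obtain ⟨T₁, hT₁⟩ := eventually_atTop.1 hCT
  have : Nonempty (Fin d) := ⟨⟨0, hd⟩⟩
  obtain ⟨x₀, hA⟩ := exists_ball_subset_closedBall_diff_zero (E := EuclideanSpace ℝ (Fin d))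
  set A := Metric.ball x₀ (1 / 4)
  have hAfin : volume A ≠ ⊤ := measure_ball_lt_top.ne
  refine ⟨C * volume.real A * (m - u), mul_pos (mul_pos hC (ENNReal.toReal_pos
    (Metric.measure_ball_pos volume x₀ (by norm_num)).ne' hAfin)) (by linarith),
    max T₁ 1, by positivity, fun T hT => ?_⟩
  obtain ⟨hT₁T, hT1⟩ : T₁ ≤ T ∧ 1 ≤ T := by simpa using hT
  calc ENNReal.ofReal (C * volume.real A * (m - u) * T ^ (-(d : ℝ) / α))
      = ENNReal.ofReal (C * T ^ (-(d : ℝ) / α)) * volume A * volume (Ioc u m) := by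
        rw [Real.volume_Ioc, ← ofReal_measureReal hAfin, ← ENNReal.ofReal_mul (by positivity),
          ← ENNReal.ofReal_mul (by positivity)]
        ring_nf
    _ ≤ _ := ofReal_mul_measure_mul_le_lintegral measurableSet_ball measurableSet_Ioc
        (fun r hr => hu.trans_lt hr.1) fun x hx r hr => by
          rw [hU', hR']
          exact hT₁ T hT₁T x (hA hx).2 (mem_closedBall_zero_iff.1 (hA hx).1) r hr

/-- Lower bound (4.5) for `D_T^+`: for `T` large enough,
`∫_{ℝ^d}∫_0^∞ ((U_T+R)^{1+β} − U_T^{1+β} − R^{1+β}) dr dx ≥ C T^{−d/α}`. -/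
theorem stmt11 (d : ℕ) (hd : 1 ≤ d) (α β : ℝ) (hα0 : 0 < α) (hα2 : α < 2)
    (hβ0 : 0 < β) (hβ1 : β < 1)
    (hdim1 : α / β < d) (hdim2 : (d : ℝ) < α * (1 + β) / β)
    (q : EuclideanSpace ℝ (Fin d) → ℝ) (hqm : Measurable q) (hq0 : ∀ x, 0 ≤ q x)
    (c₁ c₂ : ℝ) (hc₁ : 0 < c₁) (hc₂ : 0 < c₂)
    (hq1 : ∀ x, c₁ / (1 + ‖x‖ ^ ((d : ℝ) + α)) ≤ q x)
    (hq2 : ∀ x, q x ≤ c₂ / (1 + ‖x‖ ^ ((d : ℝ) + α)))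
    (u v s t z : ℝ) (hu : 0 ≤ u) (huv : u < v) (hvs : v < s) (hst : s < t) (hz : 0 < z)
    (U : ℝ → EuclideanSpace ℝ (Fin d) → ℝ → ℝ)
    (hU : ∀ T x r, U T x r = z *
      ((Set.Icc (0:ℝ) (s + T)).indicator
          (fun _ => ∫ r' in (s + T)..(t + T), pker d α q (r' - r) x) r +
        (Set.Ioc (s + T) (t + T)).indicator
          (fun _ => ∫ r' in r..(t + T), pker d α q (r' - r) x) r))
    (R : EuclideanSpace ℝ (Fin d) → ℝ → ℝ)
    (hR : ∀ x r, R x r =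
      (Set.Icc (0:ℝ) u).indicator (fun _ => ∫ r' in u..v, pker d α q (r' - r) x) r +
        (Set.Ioc u v).indicator (fun _ => ∫ r' in r..v, pker d α q (r' - r) x) r) :
    ∃ C : ℝ, 0 < C ∧ ∃ T₀ : ℝ, 0 < T₀ ∧ ∀ T : ℝ, T₀ ≤ T →
      ENNReal.ofReal (C * T ^ (-(d : ℝ) / α)) ≤
        ∫⁻ x : EuclideanSpace ℝ (Fin d), ∫⁻ r in Set.Ioi (0:ℝ),
          ENNReal.ofReal
            ((U T x r + R x r) ^ (1 + β) - (U T x r) ^ (1 + β) - (R x r) ^ (1 + β)) :=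
  stmt11_general d hd α β hα0 hβ0 q hqm hq0 c₁ c₂ hc₁ hc₂ hq1 hq2 u v s t z hu huv hvs hst hz U hU R
    hR
end
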